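/- Let p, q, r, s be integers greater than 1 with ps − qr = 1; set N = pqrs, α = qr − 1, β = ps − 1. Define M : ℤ × ℤ → ℤ/Nℤ to be 4-periodic in both indices with fundamental 4×4 block (rows listed top to bottom, entries taken mod N): (p, q, −p, −q), (r, s, −r, −s), (αp, βq, p, q), (βr, αs, r, s). Then every entry of M is wild: for all i, j ∈ ℤ, the determinant of the 3×3 matrix (M(i+u, j+v))_{u,v ∈ {−1,0,1}} is nonzero in ℤ/Nℤ. -/

import Mathlib

/-!
Modulo `p * s - q * r = 1` and `p * q * r * s = 0`, the 3×3 determinant centred at `(i, j)` reduces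
to `N / x`, where `x` is the entry of `[[p, q], [r, s]]` at `(i mod 2, j mod 2)`. Since `x > 1`, this
is a positive proper divisor of `N`, hence nonzero in `ZMod N`.
-/

/-- The determinant of the 3×3 block of `m` centred at `(i, j)`. -/
def nbhdDet {R : Type*} [CommRing R] (m : ℤ × ℤ → R) (i j : ℤ) : R :=
  (Matrix.of fun u v : Fin 3 => m (i + ((u : ℕ) : ℤ) - 1, j + ((v : ℕ) : ℤ) - 1)).det

/-- The entry `m (i, j)` is wild if the surrounding 3×3 determinant is nonzero. -/
def IsWild {R : Type*} [CommRing R] (m : ℤ × ℤ → R) (i j : ℤ) : Prop :=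
  nbhdDet m i j ≠ 0

/-- The fundamental 4×4 block with rows
`(p, q, -p, -q)`, `(r, s, -r, -s)`, `(αp, βq, p, q)`, `(βr, αs, r, s)`,
where `α = qr - 1` and `β = ps - 1`. -/
def blockM (p q r s : ℤ) : Fin 4 → Fin 4 → ℤ :=
  ![![p, q, -p, -q],
    ![r, s, -r, -s],
    ![(q * r - 1) * p, (p * s - 1) * q, p, q],
    ![(p * s - 1) * r, (q * r - 1) * s, r, s]]

open Fin.NatCast in
/-- The doubly 4-periodic tiling over `ZMod N` with fundamental block `blockM p q r s`. -/
def Mpqrs (p q r s : ℤ) (N : ℕ) : ℤ × ℤ → ZMod N := fun ij =>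
  ((blockM p q r s ((ij.1 % 4).toNat : Fin 4) ((ij.2 % 4).toNat : Fin 4) : ℤ) : ZMod N)

theorem nbhdDet_eq_nbhdDet_emod {R : Type*} [CommRing R] {m : ℤ × ℤ → R} {n : ℤ}
    (hm : ∀ a b, m (a, b) = m (a % n, b % n)) (i j : ℤ) :
    nbhdDet m i j = nbhdDet m (i % n) (j % n) := by
  have hshift : ∀ a c : ℤ, (a + c - 1) % n = (a % n + c - 1) % n := fun a c => by
    rw [add_sub_assoc, add_sub_assoc, Int.emod_add_emod]
  unfold nbhdDet
  congr 1
  ext u v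
  rw [Matrix.of_apply, Matrix.of_apply, hm, hm (i % n + _ - 1), hshift i, hshift j]

theorem Mpqrs_eq_Mpqrs_emod (p q r s : ℤ) (N : ℕ) (a b : ℤ) :
    Mpqrs p q r s N (a, b) = Mpqrs p q r s N (a % 4, b % 4) := by
  simp only [Mpqrs, Int.emod_emod]

theorem nbhdDet_Mpqrs_cases {p q r s : ℤ} {N : ℕ} (hdet : (p * s - q * r : ZMod N) = 1)
    (hN : (p * q * r * s : ZMod N) = 0) (i j : ℤ) :
    nbhdDet (Mpqrs p q r s N) i j = q * r * s ∨ nbhdDet (Mpqrs p q r s N) i j = p * r * s ∨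
      nbhdDet (Mpqrs p q r s N) i j = p * q * s ∨ nbhdDet (Mpqrs p q r s N) i j = p * q * r := by
  rw [nbhdDet_eq_nbhdDet_emod (Mpqrs_eq_Mpqrs_emod p q r s N)]
  have hi : 0 ≤ i % 4 ∧ i % 4 < 4 := by omega
  have hj : 0 ≤ j % 4 ∧ j % 4 < 4 := by omega
  generalize i % 4 = i at *
  generalize j % 4 = j at *
  obtain ⟨hi₀, hi₄⟩ := hi
  obtain ⟨hj₀, hj₄⟩ := hj
  interval_cases i <;> interval_cases j <;>
    simp [nbhdDet, Mpqrs, blockM, Matrix.det_fin_three, ← Fin.ofNat_eq_cast] <;> grind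

theorem intCast_ne_zero_of_natCast_eq_mul {N : ℕ} {x y : ℤ} (hN : (N : ℤ) = x * y)
    (hx : 1 < x) (hy : 0 < y) : (y : ZMod N) ≠ 0 := by
  rw [Ne, ZMod.intCast_zmod_eq_zero_iff_dvd, hN]
  intro hdvd
  nlinarith [Int.le_of_dvd hy hdvd]

theorem Mpqrs_every_entry_wild (p q r s : ℤ) (hp : 1 < p) (hq : 1 < q) (hr : 1 < r)
    (hs : 1 < s) (hdet : p * s - q * r = 1) (N : ℕ) (hN : (N : ℤ) = p * q * r * s)
    (i j : ℤ) : IsWild (Mpqrs p q r s N) i j := by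
  have hdet' : (p * s - q * r : ZMod N) = 1 := by
    exact_mod_cast congrArg (Int.cast : ℤ → ZMod N) hdet
  have hN' : (p * q * r * s : ZMod N) = 0 := by
    rw [← Int.cast_mul, ← Int.cast_mul, ← Int.cast_mul, ← hN, Int.cast_natCast, ZMod.natCast_self]
  rcases nbhdDet_Mpqrs_cases hdet' hN' i j with h | h | h | h <;>
    rw [IsWild, h, ← Int.cast_mul, ← Int.cast_mul]
  · exact intCast_ne_zero_of_natCast_eq_mul (by rw [hN]; ring) hp (by positivity)
  · exact intCast_ne_zero_of_natCast_eq_mul (by rw [hN]; ring) hq (by positivity)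
  · exact intCast_ne_zero_of_natCast_eq_mul (by rw [hN]; ring) hr (by positivity)
  · exact intCast_ne_zero_of_natCast_eq_mul (by rw [hN]; ring) hs (by positivity)
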